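/- Soundness of sBIL with respect to bi-Heyting algebras: if Γ ⊢ₛ φ, then for every bi-Heyting algebra A and every valuation v into A, if v interprets every γ ∈ Γ as ⊤, then v interprets φ as ⊤. -/
import Mathlib


/-- Formulas of the bi-intuitionistic language. -/
inductive Form : Type
  | var : ℕ → Form
  | top : Form
  | bot : Form
  | and : Form → Form → Form
  | or : Form → Form → Form
  | imp : Form → Form → Form
  | excl : Form → Form → Form

/-- Negation `¬φ := φ → ⊥`. -/
def Form.neg (φ : Form) : Form := φ.imp .bot

/-- Co-negation `∼φ := ⊤ ∖ φ`. -/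
def Form.wneg (φ : Form) : Form := Form.excl .top φ

/-- The axioms A1–A14 of the generalized Hilbert calculi for bi-intuitionistic logic. -/
inductive Ax : Form → Prop
  | a1 (φ ψ : Form) : Ax (φ.imp (ψ.imp φ))
  | a2 (φ ψ χ : Form) : Ax ((φ.imp (ψ.imp χ)).imp ((φ.imp ψ).imp (φ.imp χ)))
  | a3 (φ ψ : Form) : Ax (φ.imp (φ.or ψ))
  | a4 (φ ψ : Form) : Ax (ψ.imp (φ.or ψ))
  | a5 (φ ψ χ : Form) : Ax ((φ.imp χ).imp ((ψ.imp χ).imp ((φ.or ψ).imp χ)))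
  | a6 (φ ψ : Form) : Ax ((φ.and ψ).imp φ)
  | a7 (φ ψ : Form) : Ax ((φ.and ψ).imp ψ)
  | a8 (φ ψ χ : Form) : Ax ((χ.imp φ).imp ((χ.imp ψ).imp (χ.imp (φ.and ψ))))
  | a9 (φ : Form) : Ax (Form.bot.imp φ)
  | a10 (φ : Form) : Ax (φ.imp Form.top)
  | a11 (φ ψ : Form) : Ax (φ.imp (ψ.or (φ.excl ψ)))
  | a12 (φ ψ : Form) : Ax ((φ.excl ψ).imp (φ.imp ψ).wneg)
  | a13 (φ ψ χ : Form) : Ax (((φ.excl ψ).excl χ).imp (φ.excl (ψ.or χ)))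
  | a14 (φ ψ : Form) : Ax ((φ.excl ψ).neg.imp (φ.imp ψ))

/-- The strong bi-intuitionistic logic `sBIL`. -/
inductive sprv : Set Form → Form → Prop
  | ax {Γ φ} : Ax φ → sprv Γ φ
  | el {Γ φ} : φ ∈ Γ → sprv Γ φ
  | mp {Γ φ ψ} : sprv Γ (φ.imp ψ) → sprv Γ φ → sprv Γ ψ
  | sdn {Γ φ} : sprv Γ φ → sprv Γ φ.wneg.neg

/-- The weak bi-intuitionistic logic `wBIL`. -/
inductive wprv : Set Form → Form → Prop
  | ax {Γ φ} : Ax φ → wprv Γ φ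
  | el {Γ φ} : φ ∈ Γ → wprv Γ φ
  | mp {Γ φ ψ} : wprv Γ (φ.imp ψ) → wprv Γ φ → wprv Γ ψ
  | wdn {Γ : Set Form} {φ} : wprv ∅ φ → wprv Γ φ.wneg.neg

/-- Interpretation of formulas in a bi-Heyting algebra via a valuation. -/
def interp {α : Type*} [BiheytingAlgebra α] (v : ℕ → α) : Form → α
  | .var p => v p
  | .top => ⊤
  | .bot => ⊥
  | .and φ ψ => interp v φ ⊓ interp v ψ
  | .or φ ψ => interp v φ ⊔ interp v ψ
  | .imp φ ψ => interp v φ ⇨ interp v ψ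
  | .excl φ ψ => interp v φ \ interp v ψ



private lemma hinf3 {α : Type*} [HeytingAlgebra α] {x a b : α} (h1 : x ≤ a ⇨ b) (h2 : x ≤ a) :
    x ≤ b := (le_inf h1 h2).trans himp_inf_le

lemma ax_interp_top {α : Type*} [BiheytingAlgebra α] (v : ℕ → α) {φ : Form}
    (h : Ax φ) : interp v φ = ⊤ := by
  induction h with
  | a1 φ ψ =>
      simp only [interp, himp_eq_top_iff, le_himp_iff]
      exact inf_le_left
  | a2 φ ψ χ =>
      simp only [interp, himp_eq_top_iff, le_himp_iff]
      exact hinf3 (hinf3 (inf_le_left.trans inf_le_left) inf_le_right)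
        (hinf3 (inf_le_left.trans inf_le_right) inf_le_right)
  | a3 φ ψ => simp [interp, himp_eq_top_iff]
  | a4 φ ψ => simp [interp, himp_eq_top_iff]
  | a5 φ ψ χ =>
      simp only [interp, himp_eq_top_iff, le_himp_iff]
      rw [inf_sup_left]
      exact sup_le (hinf3 (inf_le_left.trans inf_le_left) inf_le_right)
        (hinf3 (inf_le_left.trans inf_le_right) inf_le_right)
  | a6 φ ψ => simp [interp, himp_eq_top_iff]
  | a7 φ ψ => simp [interp, himp_eq_top_iff]
  | a8 φ ψ χ =>
      simp only [interp, himp_eq_top_iff, le_himp_iff]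
      exact le_inf (hinf3 (inf_le_left.trans inf_le_left) inf_le_right)
        (hinf3 (inf_le_left.trans inf_le_right) inf_le_right)
  | a9 φ => simp [interp, himp_eq_top_iff]
  | a10 φ => simp [interp, himp_eq_top_iff]
  | a11 φ ψ =>
      simp only [interp, himp_eq_top_iff]
      exact le_sup_sdiff
  | a12 φ ψ =>
      simp only [interp, Form.wneg, himp_eq_top_iff, sdiff_le_iff]
      calc interp v φ = interp v φ ⊓ ⊤ := (inf_top_eq _).symm
        _ ≤ interp v φ ⊓ ((interp v φ ⇨ interp v ψ) ⊔ ⊤ \ (interp v φ ⇨ interp v ψ)) :=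
            inf_le_inf le_rfl le_sup_sdiff
        _ = interp v φ ⊓ (interp v φ ⇨ interp v ψ) ⊔ interp v φ ⊓ (⊤ \ (interp v φ ⇨ interp v ψ)) :=
            inf_sup_left _ _ _
        _ ≤ interp v ψ ⊔ ⊤ \ (interp v φ ⇨ interp v ψ) :=
            sup_le_sup inf_himp_le inf_le_right
  | a13 φ ψ χ =>
      simp only [interp, himp_eq_top_iff, sdiff_sdiff]; exact le_rfl
  | a14 φ ψ =>
      simp only [interp, Form.neg, himp_eq_top_iff, le_himp_iff]
      calc (interp v φ \ interp v ψ ⇨ ⊥) ⊓ interp v φ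
          ≤ (interp v φ \ interp v ψ ⇨ ⊥) ⊓ (interp v ψ ⊔ interp v φ \ interp v ψ) :=
            inf_le_inf le_rfl le_sup_sdiff
        _ = (interp v φ \ interp v ψ ⇨ ⊥) ⊓ interp v ψ ⊔ (interp v φ \ interp v ψ ⇨ ⊥) ⊓ (interp v φ \ interp v ψ) :=
            inf_sup_left _ _ _
        _ ≤ interp v ψ ⊔ ⊥ := sup_le_sup inf_le_right himp_inf_le
        _ = interp v ψ := sup_bot_eq _

theorem sBIL_alg_soundness (Γ : Set Form) (φ : Form) (h : sprv Γ φ) :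
    ∀ (α : Type*) [BiheytingAlgebra α] (v : ℕ → α),
      (∀ γ ∈ Γ, interp v γ = ⊤) → interp v φ = ⊤ := by
  induction h with
  | ax hax => intro α _ v _; exact ax_interp_top v hax
  | el hmem => intro α _ v hv; exact hv _ hmem
  | mp h1 h2 ih1 ih2 =>
      intro α _ v hv
      have := ih1 α v hv
      have h2' := ih2 α v hv
      simp only [interp, h2', himp_eq_top_iff, top_le_iff] at this
      exact this
  | sdn h ih =>
      intro α _ v hv
      simp [interp, Form.wneg, Form.neg, ih α v hv]
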